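/- Let μ and ν be probability measures on ℝ^d × ℝ, let h : ℝ^d → ℝ be R-Lipschitz, let ℓ : ℝ × ℝ → ℝ be ρ-Lipschitz in each argument, with R ≥ 0, ρ ≥ 0, and let p ≥ 1 be real. Let γ be any coupling of μ and ν such that ℓ(h(x), y) and ℓ(h(x'), y') are γ-integrable and the cost c((x,y),(x',y')) = ‖x − x'‖₂ + |y − y'| satisfies c^p is γ-integrable. Then |ε_μ(h) − ε_ν(h)| ≤ ρ·√(R² + 1)·(∫ c^p dγ)^{1/p}. -/

import Mathlib

/-!
Pushing both population losses forward to the coupling `γ` turns their difference into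
`∫ (ℓ(h x, y) - ℓ(h x', y')) dγ`. The integrand is bounded by `ρ (R ‖x - x'‖ + |y - y'|)`,
hence by `ρ √(R² + 1)` times the cost `c`, and Jensen's inequality for the convex map
`t ↦ t ^ p` on a probability space gives `∫ c dγ ≤ (∫ c ^ p dγ) ^ (1 / p)`.
-/

open MeasureTheory

/-- The population loss of classifier `h` under loss `ℓ` and distribution `μ`. -/
noncomputable def popLoss {d : ℕ} (ℓ : ℝ → ℝ → ℝ) (h : EuclideanSpace ℝ (Fin d) → ℝ)
    (μ : Measure (EuclideanSpace ℝ (Fin d) × ℝ)) : ℝ :=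
  ∫ p, ℓ (h p.1) p.2 ∂μ

namespace MeasureTheory.Measure

variable {β Ω E : Type*} [MeasurableSpace β] [MeasurableSpace Ω]
  [NormedAddCommGroup E] [NormedSpace ℝ E] [CompleteSpace E]
  {ρ : Measure (β × Ω)} [IsFiniteMeasure ρ]

/-- Unlike `integral_map`, no measurability of `g` with respect to the marginal is assumed:
disintegrating `ρ` supplies it. -/
theorem integral_fst_eq_integral_comp_fst [StandardBorelSpace Ω] [Nonempty Ω] {g : β → E}
    (hg : Integrable (fun q => g q.1) ρ) : ∫ x, g x ∂ρ.fst = ∫ q, g q.1 ∂ρ := by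
  rw [← ρ.integral_condKernel hg]
  congr 1 with x
  dsimp only
  rw [integral_const, probReal_univ, one_smul]

theorem integral_snd_eq_integral_comp_snd [StandardBorelSpace β] [Nonempty β] {g : Ω → E}
    (hg : Integrable (fun q => g q.2) ρ) : ∫ y, g y ∂ρ.snd = ∫ q, g q.2 ∂ρ := by
  have hswap : Integrable (fun q => g q.1) (ρ.map Prod.swap) :=
    (integrable_map_equiv MeasurableEquiv.prodComm _).2 hg
  rw [← fst_map_swap, integral_fst_eq_integral_comp_fst hswap,
    integral_map measurable_swap.aemeasurable hswap.1]
  rfl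

end MeasureTheory.Measure

section Rpow

variable {α : Type*} [MeasurableSpace α] {μ : Measure α} {f : α → ℝ} {p : ℝ}

theorem MeasureTheory.Integrable.of_rpow [IsFiniteMeasure μ] (hp : 1 ≤ p)
    (hfm : AEStronglyMeasurable f μ) (hf0 : ∀ᵐ x ∂μ, 0 ≤ f x)
    (hfp : Integrable (fun x => f x ^ p) μ) : Integrable f μ := by
  refine ((integrable_const 1).add hfp).mono' hfm (hf0.mono fun x hx => ?_)
  rw [Pi.add_apply, Real.norm_of_nonneg hx]
  rcases le_total (f x) 1 with hle | hle
  · linarith [Real.rpow_nonneg hx p]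
  · linarith [Real.self_le_rpow_of_one_le hle hp]

theorem integral_le_integral_rpow_rpow_one_div [IsProbabilityMeasure μ] (hp : 1 ≤ p)
    (hf0 : ∀ᵐ x ∂μ, 0 ≤ f x) (hf : Integrable f μ) (hfp : Integrable (fun x => f x ^ p) μ) :
    ∫ x, f x ∂μ ≤ (∫ x, f x ^ p ∂μ) ^ (1 / p) := by
  have jensen : (∫ x, f x ∂μ) ^ p ≤ ∫ x, f x ^ p ∂μ :=
    (convexOn_rpow hp).map_integral_le
      (Real.continuous_rpow_const (by linarith)).continuousOn isClosed_Ici hf0 hf hfp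
  rwa [one_div, Real.le_rpow_inv_iff_of_pos (integral_nonneg_of_ae hf0)
    (integral_nonneg_of_ae (hf0.mono fun x hx => Real.rpow_nonneg hx p)) (by linarith)]

end Rpow

theorem abs_loss_sub_le {E : Type*} [SeminormedAddCommGroup E] {R ρ : ℝ} (hρ : 0 ≤ ρ)
    {h : E → ℝ} {ℓ : ℝ → ℝ → ℝ} (hLip : ∀ x x' : E, |h x - h x'| ≤ R * ‖x - x'‖)
    (hℓ₁ : ∀ y y' z : ℝ, |ℓ y z - ℓ y' z| ≤ ρ * |y - y'|)
    (hℓ₂ : ∀ y y' z : ℝ, |ℓ z y - ℓ z y'| ≤ ρ * |y - y'|) (x x' : E) (y y' : ℝ) :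
    |ℓ (h x) y - ℓ (h x') y'| ≤ ρ * Real.sqrt (R ^ 2 + 1) * (‖x - x'‖ + |y - y'|) := by
  have hR : R ≤ Real.sqrt (R ^ 2 + 1) := Real.le_sqrt_of_sq_le (by linarith)
  have h1 : 1 ≤ Real.sqrt (R ^ 2 + 1) := Real.one_le_sqrt.2 (by nlinarith)
  have slack : 0 ≤ ρ * ((Real.sqrt (R ^ 2 + 1) - R) * ‖x - x'‖ +
      (Real.sqrt (R ^ 2 + 1) - 1) * |y - y'|) := by
    have := norm_nonneg (x - x'); have := abs_nonneg (y - y')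
    have := sub_nonneg.2 hR; have := sub_nonneg.2 h1
    positivity
  calc |ℓ (h x) y - ℓ (h x') y'|
      ≤ |ℓ (h x) y - ℓ (h x') y| + |ℓ (h x') y - ℓ (h x') y'| := abs_sub_le _ _ _
    _ ≤ ρ * (R * ‖x - x'‖) + ρ * |y - y'| :=
        add_le_add ((hℓ₁ _ _ _).trans (mul_le_mul_of_nonneg_left (hLip x x') hρ)) (hℓ₂ _ _ _)
    _ ≤ ρ * Real.sqrt (R ^ 2 + 1) * (‖x - x'‖ + |y - y'|) := by linarith

theorem error_difference_Wp_coupling_bound_general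
    {d : ℕ} (R ρ p : ℝ) (hρ : 0 ≤ ρ) (hp : 1 ≤ p)
    (μ ν : Measure (EuclideanSpace ℝ (Fin d) × ℝ))
    (h : EuclideanSpace ℝ (Fin d) → ℝ) (ℓ : ℝ → ℝ → ℝ)
    (hLip : ∀ x x' : EuclideanSpace ℝ (Fin d), |h x - h x'| ≤ R * ‖x - x'‖)
    (hℓ₁ : ∀ y y' z : ℝ, |ℓ y z - ℓ y' z| ≤ ρ * |y - y'|)
    (hℓ₂ : ∀ y y' z : ℝ, |ℓ z y - ℓ z y'| ≤ ρ * |y - y'|)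
    (γ : Measure ((EuclideanSpace ℝ (Fin d) × ℝ) × (EuclideanSpace ℝ (Fin d) × ℝ)))
    [IsProbabilityMeasure γ]
    (hγ₁ : γ.map Prod.fst = μ) (hγ₂ : γ.map Prod.snd = ν)
    (hint₁ : Integrable (fun q => ℓ (h q.1.1) q.1.2) γ)
    (hint₂ : Integrable (fun q => ℓ (h q.2.1) q.2.2) γ)
    (hintc : Integrable (fun q => (‖q.1.1 - q.2.1‖ + |q.1.2 - q.2.2|) ^ p) γ) :
    |popLoss ℓ h μ - popLoss ℓ h ν| ≤
      ρ * Real.sqrt (R ^ 2 + 1) *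
        (∫ q, (‖q.1.1 - q.2.1‖ + |q.1.2 - q.2.2|) ^ p ∂γ) ^ (1 / p) := by
  have hc0 : ∀ᵐ q ∂γ, 0 ≤ ‖q.1.1 - q.2.1‖ + |q.1.2 - q.2.2| :=
    ae_of_all _ fun q => by positivity
  have hc : Integrable (fun q => ‖q.1.1 - q.2.1‖ + |q.1.2 - q.2.2|) γ :=
    hintc.of_rpow hp (by fun_prop) hc0
  have hμ : popLoss ℓ h μ = ∫ q, ℓ (h q.1.1) q.1.2 ∂γ := by
    rw [popLoss, ← hγ₁]
    exact γ.integral_fst_eq_integral_comp_fst (g := fun z => ℓ (h z.1) z.2) hint₁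
  have hν : popLoss ℓ h ν = ∫ q, ℓ (h q.2.1) q.2.2 ∂γ := by
    rw [popLoss, ← hγ₂]
    exact γ.integral_snd_eq_integral_comp_snd (g := fun z => ℓ (h z.1) z.2) hint₂
  rw [hμ, hν, ← integral_sub hint₁ hint₂]
  calc |∫ q, (ℓ (h q.1.1) q.1.2 - ℓ (h q.2.1) q.2.2) ∂γ|
      ≤ ∫ q, |ℓ (h q.1.1) q.1.2 - ℓ (h q.2.1) q.2.2| ∂γ := abs_integral_le_integral_abs
    _ ≤ ∫ q, ρ * Real.sqrt (R ^ 2 + 1) * (‖q.1.1 - q.2.1‖ + |q.1.2 - q.2.2|) ∂γ :=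
        integral_mono (hint₁.sub hint₂).abs (hc.const_mul _)
          fun q => abs_loss_sub_le hρ hLip hℓ₁ hℓ₂ _ _ _ _
    _ ≤ ρ * Real.sqrt (R ^ 2 + 1) *
          (∫ q, (‖q.1.1 - q.2.1‖ + |q.1.2 - q.2.2|) ^ p ∂γ) ^ (1 / p) := by
        rw [integral_const_mul]
        gcongr
        exact integral_le_integral_rpow_rpow_one_div hp hc0 hc hintc

/-- p-Wasserstein form of Lemma 4.1. -/
theorem error_difference_Wp_coupling_bound
    {d : ℕ} (R ρ p : ℝ) (hR : 0 ≤ R) (hρ : 0 ≤ ρ) (hp : 1 ≤ p)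
    (μ ν : Measure (EuclideanSpace ℝ (Fin d) × ℝ))
    [IsProbabilityMeasure μ] [IsProbabilityMeasure ν]
    (h : EuclideanSpace ℝ (Fin d) → ℝ) (ℓ : ℝ → ℝ → ℝ)
    (hLip : ∀ x x' : EuclideanSpace ℝ (Fin d), |h x - h x'| ≤ R * ‖x - x'‖)
    (hℓ₁ : ∀ y y' z : ℝ, |ℓ y z - ℓ y' z| ≤ ρ * |y - y'|)
    (hℓ₂ : ∀ y y' z : ℝ, |ℓ z y - ℓ z y'| ≤ ρ * |y - y'|)
    (γ : Measure ((EuclideanSpace ℝ (Fin d) × ℝ) × (EuclideanSpace ℝ (Fin d) × ℝ)))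
    [IsProbabilityMeasure γ]
    (hγ₁ : γ.map Prod.fst = μ) (hγ₂ : γ.map Prod.snd = ν)
    (hint₁ : Integrable (fun q => ℓ (h q.1.1) q.1.2) γ)
    (hint₂ : Integrable (fun q => ℓ (h q.2.1) q.2.2) γ)
    (hintc : Integrable (fun q => (‖q.1.1 - q.2.1‖ + |q.1.2 - q.2.2|) ^ p) γ) :
    |popLoss ℓ h μ - popLoss ℓ h ν| ≤
      ρ * Real.sqrt (R ^ 2 + 1) *
        (∫ q, (‖q.1.1 - q.2.1‖ + |q.1.2 - q.2.2|) ^ p ∂γ) ^ (1 / p) :=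
  error_difference_Wp_coupling_bound_general R ρ p hρ hp μ ν h ℓ hLip hℓ₁ hℓ₂ γ hγ₁ hγ₂ hint₁ hint₂
    hintc
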